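/- arXiv:2603.21620 — 3 statements merged into one kernel-verified Lean document; each statement's English description precedes it below -/
import Mathlib

section
/- Let K be a number field and let d = p^k where p is an odd prime and k ≥ 1 (so d ≥ 3 is an odd prime power). Then Per_inf(T_d,K) = 1/2, where T_d is regarded as a polynomial with coefficients in 𝓞_K. -/
open Polynomial NumberField Filter

/-- The number of periodic points of the evaluation map of a polynomial `g` over a
commutative ring. -/
noncomputable def perCount {F : Type*} [CommRing F] (g : F[X]) : ℕ :=
  Nat.card {α : F | ∃ m, 1 ≤ m ∧ (fun x => g.eval x)^[m] α = α}

/-- `Per_inf(f, K)`: the liminf, as `N(𝔭) → ∞`, of the proportion of periodic points of the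
reduction of `f` modulo a nonzero prime ideal `𝔭` of `𝓞 K`. -/
noncomputable def perInf (K : Type*) [Field K] [NumberField K] (f : (𝓞 K)[X]) : ℝ :=
  liminf
    (fun 𝔭 : {I : Ideal (𝓞 K) // I.IsPrime ∧ I ≠ ⊥} =>
      (perCount (f.map (Ideal.Quotient.mk 𝔭.1)) : ℝ) / (Ideal.absNorm 𝔭.1 : ℝ))
    (comap (fun 𝔭 : {I : Ideal (𝓞 K) // I.IsPrime ∧ I ≠ ⊥} => Ideal.absNorm 𝔭.1) atTop)

namespace PerInfAux


variable {E : Type*} [Field E]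

/-- Fibers of `x ↦ x + x⁻¹`. -/
lemma fiber_eq {x y : E} (hx : x ≠ 0) (hy : y ≠ 0) (h : x + x⁻¹ = y + y⁻¹) :
    y = x ∨ y = x⁻¹ := by
  have hx1 : x * x⁻¹ = 1 := mul_inv_cancel₀ hx
  have hy1 : y * y⁻¹ = 1 := mul_inv_cancel₀ hy
  have h0 : (y - x) * (y - x⁻¹) = 0 := by linear_combination hx1 - hy1 - y * h
  rcases mul_eq_zero.mp h0 with h | h
  · exact Or.inl (sub_eq_zero.mp h)
  · exact Or.inr (sub_eq_zero.mp h)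

lemma self_inv_cases {x : E} (hx : x ≠ 0) (h : x = x⁻¹) : x = 1 ∨ x = -1 := by
  have hx1 : x * x⁻¹ = 1 := mul_inv_cancel₀ hx
  have h0 : (x - 1) * (x + 1) = 0 := by linear_combination hx1 + x * h
  rcases mul_eq_zero.mp h0 with h | h
  · exact Or.inl (sub_eq_zero.mp h)
  · exact Or.inr (eq_neg_of_add_eq_zero_left h)

lemma ncard_le_two_mul_image {S : Set E} (hfin : S.Finite) (h0 : 0 ∉ S) :
    S.ncard ≤ 2 * ((fun x => x + x⁻¹) '' S).ncard := by
  classical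
  set φ : E → E := fun x => x + x⁻¹ with hφ
  set T : Set E := φ '' S with hT
  have hTfin : T.Finite := hfin.image _
  have hsel : ∀ t : E, ∃ x : E, t ∈ T → (x ∈ S ∧ φ x = t) := by
    intro t
    by_cases h : t ∈ T
    · obtain ⟨x, hx, hfx⟩ := h
      exact ⟨x, fun _ => ⟨hx, hfx⟩⟩
    · exact ⟨0, fun h' => absurd h' h⟩
  choose sel hsel using hsel
  set S1 : Set E := {x ∈ S | x = sel (φ x)} with hS1
  set S2 : Set E := {x ∈ S | x ≠ sel (φ x)} with hS2
  have hunion : S = S1 ∪ S2 := by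
    ext x
    simp only [hS1, hS2, Set.mem_union, Set.mem_setOf_eq]
    tauto
  have hdisj : Disjoint S1 S2 := by
    rw [Set.disjoint_left]
    rintro x ⟨hxS, hx1⟩ ⟨_, hx2⟩
    exact hx2 hx1
  have hsub1 : S1 ⊆ S := fun x hx => hx.1
  have hsub2 : S2 ⊆ S := fun x hx => hx.1
  have hinj1 : Set.InjOn φ S1 := by
    rintro x ⟨hxS, hx⟩ y ⟨hyS, hy⟩ hxy
    rw [hx, hy, hxy]
  have hinj2 : Set.InjOn φ S2 := by
    rintro x ⟨hxS, hx⟩ y ⟨hyS, hy⟩ hxy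
    have hxmem : φ x ∈ T := Set.mem_image_of_mem _ hxS
    have hymem : φ y ∈ T := Set.mem_image_of_mem _ hyS
    obtain ⟨hsS, hsφ⟩ := hsel (φ x) hxmem
    have hx0 : x ≠ 0 := fun h => h0 (h ▸ hxS)
    have hy0 : y ≠ 0 := fun h => h0 (h ▸ hyS)
    have hs0 : sel (φ x) ≠ 0 := fun h => h0 (h ▸ hsS)
    have h1 : sel (φ x) = x ∨ sel (φ x) = x⁻¹ := fiber_eq hx0 hs0 hsφ.symm
    have h2 : sel (φ x) = y ∨ sel (φ x) = y⁻¹ := by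
      apply fiber_eq hy0 hs0
      show φ y = φ (sel (φ x))
      rw [hsφ, hxy]
    rcases h1 with h1 | h1
    · exact absurd h1.symm hx
    rcases h2 with h2 | h2
    · exact absurd (by rw [← hxy, h2]) hy
    · have : x⁻¹ = y⁻¹ := by rw [← h1, h2]
      exact inv_injective this
  calc S.ncard = S1.ncard + S2.ncard := by
        rw [hunion, Set.ncard_union_eq hdisj (hfin.subset hsub1) (hfin.subset hsub2)]
    _ ≤ T.ncard + T.ncard := by
        have hle1 : S1.ncard ≤ T.ncard := by
          rw [← Set.ncard_image_of_injOn hinj1]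
          exact Set.ncard_le_ncard (Set.image_mono hsub1) hTfin
        have hle2 : S2.ncard ≤ T.ncard := by
          rw [← Set.ncard_image_of_injOn hinj2]
          exact Set.ncard_le_ncard (Set.image_mono hsub2) hTfin
        exact Nat.add_le_add hle1 hle2
    _ = 2 * T.ncard := by ring

lemma two_mul_image_ncard_le {S : Set E} (hfin : S.Finite) (h0 : 0 ∉ S)
    (hinv : ∀ x ∈ S, x⁻¹ ∈ S) :
    2 * ((fun x => x + x⁻¹) '' S).ncard ≤ S.ncard + 4 := by
  classical
  set φ : E → E := fun x => x + x⁻¹ with hφ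
  set T : Set E := φ '' S with hT
  have hTfin : T.Finite := hfin.image _
  have hsel : ∀ t : E, ∃ x : E, t ∈ T → (x ∈ S ∧ φ x = t) := by
    intro t
    by_cases h : t ∈ T
    · obtain ⟨x, hx, hfx⟩ := h
      exact ⟨x, fun _ => ⟨hx, hfx⟩⟩
    · exact ⟨0, fun h' => absurd h' h⟩
  choose sel hsel using hsel
  set T' : Set E := T \ {(2 : E), -2} with hT'
  have hT'fin : T'.Finite := hTfin.subset Set.diff_subset
  have hTcard : T.ncard ≤ T'.ncard + 2 := by
    have hsub : T ⊆ T' ∪ {(2 : E), -2} := by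
      intro t ht
      by_cases h : t ∈ ({(2 : E), -2} : Set E)
      · exact Or.inr h
      · exact Or.inl ⟨ht, h⟩
    calc T.ncard ≤ (T' ∪ {(2 : E), -2}).ncard :=
          Set.ncard_le_ncard hsub (hT'fin.union ((Set.finite_singleton _).insert _))
      _ ≤ T'.ncard + ({(2 : E), -2} : Set E).ncard := Set.ncard_union_le _ _
      _ ≤ T'.ncard + 2 := by
          gcongr
          calc ({(2 : E), -2} : Set E).ncard ≤ ({(-2 : E)} : Set E).ncard + 1 :=
                Set.ncard_insert_le _ _
            _ ≤ 2 := by rw [Set.ncard_singleton]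
  -- key: 2 * T'.ncard ≤ S.ncard
  have hkey : 2 * T'.ncard ≤ S.ncard := by
    have hselS : ∀ t ∈ T', sel t ∈ S := fun t ht => (hsel t ht.1).1
    have hselφ : ∀ t ∈ T', φ (sel t) = t := fun t ht => (hsel t ht.1).2
    have hsel0 : ∀ t ∈ T', sel t ≠ 0 := fun t ht h => h0 (h ▸ hselS t ht)
    have hselinv : ∀ t ∈ T', sel t ≠ (sel t)⁻¹ := by
      intro t ht h
      rcases self_inv_cases (hsel0 t ht) h with h1 | h1
      · apply ht.2
        have : t = 2 := by
          rw [← hselφ t ht, h1]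
          simp [hφ]
          norm_num
        simp [this]
      · apply ht.2
        have : t = -2 := by
          rw [← hselφ t ht, h1]
          simp [hφ]
          norm_num
        simp [this]
    set A1 : Set E := (fun t => sel t) '' T' with hA1
    set A2 : Set E := (fun t => (sel t)⁻¹) '' T' with hA2
    have hφinv : ∀ t ∈ T', φ ((sel t)⁻¹) = t := by
      intro t ht
      have : φ ((sel t)⁻¹) = (sel t)⁻¹ + sel t := by
        simp [hφ, inv_inv]
      rw [this, add_comm]
      exact hselφ t ht
    have hA1S : A1 ⊆ S := by rintro x ⟨t, ht, rfl⟩; exact hselS t ht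
    have hA2S : A2 ⊆ S := by rintro x ⟨t, ht, rfl⟩; exact hinv _ (hselS t ht)
    have hinj1 : Set.InjOn (fun t => sel t) T' := by
      intro t ht t' ht' h
      have h' : sel t = sel t' := h
      rw [← hselφ t ht, ← hselφ t' ht', h']
    have hinj2 : Set.InjOn (fun t => (sel t)⁻¹) T' := by
      intro t ht t' ht' h
      have h' : (sel t)⁻¹ = (sel t')⁻¹ := h
      rw [← hφinv t ht, ← hφinv t' ht', h']
    have hdisj : Disjoint A1 A2 := by
      rw [Set.disjoint_left]
      rintro x ⟨t, ht, rfl⟩ ⟨t', ht', hx⟩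
      have hx' : (sel t')⁻¹ = sel t := hx
      have h1 : t' = t := by
        rw [← hφinv t' ht', hx', hselφ t ht]
      rw [h1] at hx
      exact hselinv t ht hx.symm
    calc 2 * T'.ncard = A1.ncard + A2.ncard := by
          rw [Set.ncard_image_of_injOn hinj1, Set.ncard_image_of_injOn hinj2]; ring
      _ = (A1 ∪ A2).ncard :=
          (Set.ncard_union_eq hdisj (hfin.subset hA1S) (hfin.subset hA2S)).symm
      _ ≤ S.ncard := Set.ncard_le_ncard (Set.union_subset hA1S hA2S) hfin
  omega



variable {E : Type*} [Field E]

lemma dickson_iterate (d m : ℕ) (x : E) (hx : x ≠ 0) :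
    (fun y => (dickson 1 (1 : E) d).eval y)^[m] (x + x⁻¹)
      = x ^ d ^ m + (x ^ d ^ m)⁻¹ := by
  induction m with
  | zero => simp
  | succ m ih =>
    rw [Function.iterate_succ_apply', ih]
    have h : x ^ d ^ m * (x ^ d ^ m)⁻¹ = 1 := mul_inv_cancel₀ (pow_ne_zero _ hx)
    show (dickson 1 (1 : E) d).eval (x ^ d ^ m + (x ^ d ^ m)⁻¹) = _
    rw [dickson_one_one_eval_add_inv _ _ h, ← pow_mul, inv_pow, ← pow_mul, ← pow_succ]

lemma exists_pow_pow_eq_self {x : E} (d c : ℕ) (hd : 0 < d) (hc : 0 < c)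
    (hxc : x ^ c = 1) (hcop : Nat.Coprime d c) :
    ∃ m, 1 ≤ m ∧ x ^ d ^ m = x := by
  refine ⟨c.totient, Nat.totient_pos.mpr hc, ?_⟩
  have h : d ^ c.totient ≡ 1 [MOD c] := Nat.ModEq.pow_totient hcop
  have h1 : 1 ≤ d ^ c.totient := Nat.one_le_pow _ _ hd
  obtain ⟨t, ht⟩ := (Nat.modEq_iff_dvd' h1).mp h.symm
  have hdm : d ^ c.totient = c * t + 1 := by omega
  rw [hdm, pow_add, pow_mul, hxc, one_pow, pow_one, one_mul]

lemma quad_root {β x y : E} (hx0 : x ≠ 0) (hβ : β = x + x⁻¹)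
    (hy : y ^ 2 - β * y + 1 = 0) : y = x ∨ y = x⁻¹ := by
  have hx1 : x * x⁻¹ = 1 := mul_inv_cancel₀ hx0
  subst hβ
  have h0 : (y - x) * (y - x⁻¹) = 0 := by linear_combination hy + hx1
  rcases mul_eq_zero.mp h0 with h | h
  · exact Or.inl (sub_eq_zero.mp h)
  · exact Or.inr (sub_eq_zero.mp h)

lemma ncard_pow_eq_one_le (n : ℕ) (hn : 0 < n) :
    ({x : E | x ^ n = 1} : Set E).ncard ≤ n := by
  classical
  have hsub : ({x : E | x ^ n = 1} : Set E) = ↑(nthRootsFinset n (1 : E)) := by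
    ext x
    simp [Polynomial.mem_nthRootsFinset hn]
  rw [hsub, Set.ncard_coe_finset]
  calc (nthRootsFinset n (1 : E)).card ≤ Multiset.card (nthRoots n (1 : E)) := by
        rw [nthRootsFinset]
        exact Multiset.toFinset_card_le _
    _ ≤ n := Polynomial.card_nthRoots n 1

lemma pow_eq_one_finite (n : ℕ) (hn : 0 < n) : ({x : E | x ^ n = 1} : Set E).Finite := by
  have hsub : ({x : E | x ^ n = 1} : Set E) = ↑(nthRootsFinset n (1 : E)) := by
    ext x
    simp [Polynomial.mem_nthRootsFinset hn]
  rw [hsub]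
  exact (nthRootsFinset n (1 : E)).finite_toSet

lemma iterate_eval_map {F : Type*} [CommRing F] {E' : Type*} [CommRing E']
    (f : F →+* E') (g : F[X]) (m : ℕ) (a : F) :
    (fun y => (g.map f).eval y)^[m] (f a) = f ((fun y => g.eval y)^[m] a) := by
  induction m generalizing a with
  | zero => simp
  | succ m ih =>
    rw [Function.iterate_succ_apply, Function.iterate_succ_apply]
    have : (g.map f).eval (f a) = f (g.eval a) := by
      rw [Polynomial.eval_map, Polynomial.eval₂_at_apply]
    rw [this, ih]



lemma frobFixed_eq_range (F : Type*) [Field F] [Fintype F] :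
    {y : AlgebraicClosure F | y ^ (Fintype.card F) = y}
      = Set.range (algebraMap F (AlgebraicClosure F)) := by
  classical
  set Ω := AlgebraicClosure F
  set ι := algebraMap F Ω with hι
  set q := Fintype.card F with hq
  have hq1 : 1 < q := Fintype.one_lt_card
  have hinj : Function.Injective ι := (algebraMap F Ω).injective
  set Z : Set Ω := {y : Ω | y ^ q = y} with hZ
  have hsub : Set.range ι ⊆ Z := by
    rintro _ ⟨a, rfl⟩
    show (ι a) ^ q = ι a
    rw [← map_pow, FiniteField.pow_card]
  -- Z is contained in the roots of X^q - X
  set P : Polynomial Ω := X ^ q - X with hP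
  have hPdeg : P.natDegree = q := by
    rw [hP]
    rw [natDegree_sub_eq_left_of_natDegree_lt (by simp [natDegree_X_pow]; omega),
      natDegree_X_pow]
  have hP0 : P ≠ 0 := fun h => by simp [h] at hPdeg; omega
  have hZsub : Z ⊆ ↑(P.roots.toFinset) := by
    intro y hy
    simp only [Multiset.mem_toFinset, Finset.coe_sort_coe, Multiset.mem_coe,
      Finset.mem_coe]
    rw [Polynomial.mem_roots hP0]
    show P.eval y = 0
    have hy' : y ^ q = y := hy
    rw [hP]
    simp [hy']
  have hZfin : Z.Finite := Set.Finite.subset (P.roots.toFinset.finite_toSet) hZsub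
  have hZcard : Z.ncard ≤ q := by
    calc Z.ncard ≤ (↑(P.roots.toFinset) : Set Ω).ncard :=
          Set.ncard_le_ncard hZsub (P.roots.toFinset.finite_toSet)
      _ = P.roots.toFinset.card := Set.ncard_coe_finset _
      _ ≤ Multiset.card P.roots := Multiset.toFinset_card_le _
      _ ≤ P.natDegree := Polynomial.card_roots' P
      _ = q := hPdeg
  have hrange : (Set.range ι).ncard = q := by
    rw [← Set.image_univ, Set.ncard_image_of_injective _ hinj, Set.ncard_univ,
      Nat.card_eq_fintype_card]
  exact (Set.eq_of_subset_of_ncard_le hsub (by rw [hrange]; exact hZcard) hZfin).symm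



theorem low_bound {F : Type*} [Field F] [Fintype F] (p k d : ℕ) (hp : p.Prime)
    (hpodd : Odd p) (hk : 1 ≤ k) (hd : d = p ^ k) :
    Fintype.card F - 1 ≤
      2 * ({α : F | ∃ m, 1 ≤ m ∧ (fun x => (dickson 1 (1 : F) d).eval x)^[m] α = α}).ncard := by
  classical
  set q := Fintype.card F with hqdef
  have hq1 : 1 < q := Fintype.one_lt_card
  have hd0 : 0 < d := hd ▸ pow_pos hp.pos k
  set P : Set F := {α : F | ∃ m, 1 ≤ m ∧ (fun x => (dickson 1 (1 : F) d).eval x)^[m] α = α}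
    with hPdef
  have hPfin : P.Finite := Set.toFinite _
  by_cases hdvd : p ∣ q - 1
  · -- p divides q - 1; use the (q+1)-st roots of unity in the algebraic closure
    set Ω := AlgebraicClosure F with hΩdef
    set ι := algebraMap F Ω with hιdef
    have hinj : Function.Injective ι := (algebraMap F Ω).injective
    haveI : CharP F (ringChar F) := ringChar.charP F
    set ℓ := ringChar F with hℓdef
    have hℓp : ℓ.Prime := CharP.char_is_prime F ℓ
    haveI : Fact ℓ.Prime := ⟨hℓp⟩
    obtain ⟨n, hnp, hcard⟩ := FiniteField.card F ℓ
    have hcardq : q = ℓ ^ (n : ℕ) := hcard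
    have hℓq : ℓ ∣ q := by rw [hcardq]; exact dvd_pow_self ℓ (by exact_mod_cast n.ne_zero)
    have hpq1 : ¬ p ∣ q + 1 := by
      intro h
      have h2 : p ∣ 2 := by
        have h3 := Nat.dvd_sub h hdvd
        have h4 : q + 1 - (q - 1) = 2 := by omega
        rwa [h4] at h3
      have hp2 : p = 2 := (Nat.prime_dvd_prime_iff_eq hp Nat.prime_two).mp h2
      have := Nat.odd_iff.mp hpodd
      omega
    have hℓq1 : ¬ ℓ ∣ q + 1 := by
      intro h
      have h3 := Nat.dvd_sub h hℓq
      have h4 : q + 1 - q = 1 := by omega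
      rw [h4] at h3
      exact hℓp.one_lt.ne' (Nat.dvd_one.mp h3)
    haveI : CharP Ω ℓ := charP_of_injective_algebraMap hinj ℓ
    haveI : NeZero ((q + 1 : ℕ) : Ω) := ⟨by
      rw [Ne, CharP.cast_eq_zero_iff Ω ℓ]; exact hℓq1⟩
    obtain ⟨ζ, hζ⟩ := HasEnoughRootsOfUnity.exists_primitiveRoot Ω (q + 1)
    set μ : Set Ω := {x : Ω | x ^ (q + 1) = 1} with hμdef
    have hμeq : μ = ↑(nthRootsFinset (q + 1) (1 : Ω)) := by
      ext x
      simp [hμdef, Polynomial.mem_nthRootsFinset (Nat.succ_pos q)]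
    have hμcard : μ.ncard = q + 1 := by
      rw [hμeq, Set.ncard_coe_finset, hζ.card_nthRootsFinset]
    have hμfin : μ.Finite := pow_eq_one_finite _ (by omega)
    have hμ0 : (0 : Ω) ∉ μ := by
      intro h
      have h1 : (0 : Ω) ^ (q + 1) = 1 := h
      rw [zero_pow (by omega)] at h1
      exact zero_ne_one h1
    have hfrob : ∀ a b : Ω, (a + b) ^ q = a ^ q + b ^ q := by
      intro a b
      rw [hcardq]
      exact add_pow_char_pow a b ℓ _
    have hsub : (fun x : Ω => x + x⁻¹) '' μ ⊆ ι '' P := by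
      rintro _ ⟨x, hxμ, rfl⟩
      have hx1 : x ^ (q + 1) = 1 := hxμ
      have hx0 : x ≠ 0 := by
        rintro rfl
        rw [zero_pow (by omega)] at hx1
        exact zero_ne_one hx1
      have hxq : x ^ q = x⁻¹ := by
        apply eq_inv_of_mul_eq_one_left
        rw [← pow_succ]
        exact hx1
      have hfix : (x + x⁻¹) ^ q = x + x⁻¹ := by
        rw [hfrob, hxq, inv_pow, hxq, inv_inv, add_comm]
      obtain ⟨α, hα⟩ : x + x⁻¹ ∈ Set.range ι := by
        rw [hιdef, ← frobFixed_eq_range F]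
        exact hfix
      have hcop : Nat.Coprime d (q + 1) := by
        rw [hd]
        exact ((Nat.Prime.coprime_iff_not_dvd hp).mpr hpq1).pow_left _
      obtain ⟨m, hm, hxm⟩ := exists_pow_pow_eq_self d (q + 1) hd0 (by omega) hx1 hcop
      refine ⟨α, ⟨m, hm, ?_⟩, hα⟩
      apply hinj
      have hmap : (dickson 1 (1 : F) d).map ι = dickson 1 (1 : Ω) d := by
        rw [map_dickson, map_one]
      have hiter := iterate_eval_map ι (dickson 1 (1 : F) d) m α
      rw [hmap] at hiter
      rw [← hiter, hα, dickson_iterate d m x hx0, hxm]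
    have hPimg : (ι '' P).ncard = P.ncard := Set.ncard_image_of_injective _ hinj
    have h1 : μ.ncard ≤ 2 * ((fun x : Ω => x + x⁻¹) '' μ).ncard :=
      ncard_le_two_mul_image hμfin hμ0
    have h2 : ((fun x : Ω => x + x⁻¹) '' μ).ncard ≤ (ι '' P).ncard :=
      Set.ncard_le_ncard hsub (hPfin.image ι)
    omega
  · -- p does not divide q - 1; use the nonzero elements of F
    set S : Set F := {x : F | x ≠ 0} with hSdef
    have hS0 : (0 : F) ∉ S := by simp [hSdef]
    have hSfin : S.Finite := Set.toFinite S
    have himg : (fun x : F => x + x⁻¹) '' S ⊆ P := by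
      rintro _ ⟨x, hx, rfl⟩
      have hx1 : x ^ (q - 1) = 1 := FiniteField.pow_card_sub_one_eq_one x hx
      have hcop : Nat.Coprime d (q - 1) := by
        rw [hd]
        exact ((Nat.Prime.coprime_iff_not_dvd hp).mpr hdvd).pow_left _
      obtain ⟨m, hm, hxm⟩ := exists_pow_pow_eq_self d (q - 1) hd0 (by omega) hx1 hcop
      exact ⟨m, hm, by rw [dickson_iterate d m x hx, hxm]⟩
    have hScard : S.ncard = q - 1 := by
      have hSeq : S = Set.univ \ {0} := by
        ext x
        simp [hSdef]
      rw [hSeq, Set.ncard_diff (Set.subset_univ ({0} : Set F)) (Set.finite_singleton _), Set.ncard_univ,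
        Set.ncard_singleton, Nat.card_eq_fintype_card]
    have h1 : S.ncard ≤ 2 * ((fun x : F => x + x⁻¹) '' S).ncard :=
      ncard_le_two_mul_image hSfin hS0
    have h2 : ((fun x : F => x + x⁻¹) '' S).ncard ≤ P.ncard :=
      Set.ncard_le_ncard himg hPfin
    omega


lemma quad_root' {E : Type*} [Field E] {β x y : E} (hx0 : x ≠ 0) (hβ : β = x + x⁻¹)
    (hy : y ^ 2 + 1 = β * y) : y = x ∨ y = x⁻¹ := by
  have hx1 : x * x⁻¹ = 1 := mul_inv_cancel₀ hx0
  subst hβ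
  have h0 : (y - x) * (y - x⁻¹) = 0 := by linear_combination hy + hx1
  rcases mul_eq_zero.mp h0 with h | h
  · exact Or.inl (sub_eq_zero.mp h)
  · exact Or.inr (sub_eq_zero.mp h)

theorem up_bound {F : Type*} [Field F] [Fintype F] (p k d m : ℕ) (hp : p.Prime)
    (hk : 1 ≤ k) (hd : d = p ^ k) (hm : 1 ≤ m)
    (hqmod : Fintype.card F ≡ 1 [MOD p ^ m]) :
    2 * ({α : F | ∃ m', 1 ≤ m' ∧ (fun x => (dickson 1 (1 : F) d).eval x)^[m'] α = α}).ncard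
      ≤ (Fintype.card F - 1) / p ^ m + Fintype.card F + 5 := by
  classical
  set q := Fintype.card F with hqdef
  have hq1 : 1 < q := Fintype.one_lt_card
  have hd2 : 2 ≤ d := by
    rw [hd]
    calc 2 ≤ p := hp.two_le
      _ ≤ p ^ k := Nat.le_self_pow (by omega) p
  have hpm1 : 1 ≤ p ^ m := Nat.one_le_pow _ _ hp.pos
  have hpm : p ^ m ∣ q - 1 := (Nat.modEq_iff_dvd' (by omega)).mp hqmod.symm
  set a := (q - 1) / p ^ m with hadef
  have hqa : q - 1 = p ^ m * a := (Nat.mul_div_cancel' hpm).symm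
  have ha1 : 1 ≤ a := by
    rcases Nat.eq_zero_or_pos a with h | h
    · rw [h] at hqa; omega
    · exact h
  haveI : CharP F (ringChar F) := ringChar.charP F
  set ℓ := ringChar F with hℓdef
  have hℓp : ℓ.Prime := CharP.char_is_prime F ℓ
  haveI : Fact ℓ.Prime := ⟨hℓp⟩
  obtain ⟨n, hnp, hcard⟩ := FiniteField.card F ℓ
  have hcardq : q = ℓ ^ (n : ℕ) := hcard
  set Ω := AlgebraicClosure F with hΩdef
  set ι := algebraMap F Ω with hιdef
  have hinj : Function.Injective ι := (algebraMap F Ω).injective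
  haveI : CharP Ω ℓ := charP_of_injective_algebraMap hinj ℓ
  set P : Set F := {α : F | ∃ m', 1 ≤ m' ∧ (fun x => (dickson 1 (1 : F) d).eval x)^[m'] α = α}
    with hPdef
  have hPfin : P.Finite := Set.toFinite _
  set S : Set Ω := {x : Ω | x ^ a = 1} ∪ {x : Ω | x ^ (q + 1) = 1} with hSdef
  have hSfin : S.Finite :=
    (pow_eq_one_finite a (by omega)).union (pow_eq_one_finite (q + 1) (by omega))
  have hS0 : (0 : Ω) ∉ S := by
    rintro (h | h)
    · have h1 : (0 : Ω) ^ a = 1 := h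
      rw [zero_pow (by omega)] at h1
      exact zero_ne_one h1
    · have h1 : (0 : Ω) ^ (q + 1) = 1 := h
      rw [zero_pow (by omega)] at h1
      exact zero_ne_one h1
  have hSinv : ∀ x ∈ S, x⁻¹ ∈ S := by
    rintro x (hx | hx)
    · left
      have hx1 : x ^ a = 1 := hx
      show x⁻¹ ^ a = 1
      rw [inv_pow, hx1, inv_one]
    · right
      have hx1 : x ^ (q + 1) = 1 := hx
      show x⁻¹ ^ (q + 1) = 1
      rw [inv_pow, hx1, inv_one]
  have hfq : ∀ u v : Ω, (u + v) ^ q = u ^ q + v ^ q := fun u v => by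
    rw [hcardq]; exact add_pow_char_pow u v ℓ _
  have hmap : (dickson 1 (1 : F) d).map ι = dickson 1 (1 : Ω) d := by
    rw [map_dickson, map_one]
  have hmain : ι '' P ⊆ (fun x : Ω => x + x⁻¹) '' S := by
    rintro _ ⟨α, hα, rfl⟩
    set β := ι α with hβdef
    have hdeg : (X ^ 2 - C β * X + C 1 : Polynomial Ω).degree ≠ 0 := by
      have heq2 : (X ^ 2 - C β * X + C 1 : Polynomial Ω)
          = C 1 * X ^ 2 + C (-β) * X + C 1 := by
        simp only [map_neg, map_one]
        ring
      rw [heq2, Polynomial.degree_quadratic one_ne_zero]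
      decide
    have hex : ∃ x : Ω, x ^ 2 + 1 = β * x := by
      obtain ⟨x, hx⟩ := IsAlgClosed.exists_root (X ^ 2 - C β * X + C 1 : Polynomial Ω) hdeg
      refine ⟨x, ?_⟩
      have hx' : x ^ 2 - β * x + 1 = 0 := by simpa using hx
      linear_combination hx'
    obtain ⟨x, heq⟩ := hex
    have hx0 : x ≠ 0 := by
      rintro rfl
      simp at heq
    have hβx : β = x + x⁻¹ := by
      have h1 : x * (β - x) = 1 := by linear_combination -heq
      have hxinv : x⁻¹ = β - x := inv_eq_of_mul_eq_one_right h1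
      rw [hxinv]; ring
    have hβq : β ^ q = β := by rw [hβdef, ← map_pow, FiniteField.pow_card]
    have hxq : (x ^ q) ^ 2 + 1 = β * x ^ q := by
      have h1 := congrArg (fun y : Ω => y ^ q) heq
      rw [hfq, one_pow, mul_pow, hβq, ← pow_mul, mul_comm 2 q, pow_mul] at h1
      exact h1
    have hdich : x ^ q = x ∨ x ^ q = x⁻¹ := quad_root' hx0 hβx hxq
    obtain ⟨m0, hm0, hiterα⟩ := hα
    have hiterΩ : x ^ d ^ m0 + (x ^ d ^ m0)⁻¹ = x + x⁻¹ := by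
      have h1 := iterate_eval_map ι (dickson 1 (1 : F) d) m0 α
      rw [hmap, hiterα] at h1
      rw [← dickson_iterate d m0 x hx0, ← hβx]
      exact h1
    have hD1 : 1 ≤ d ^ m0 := Nat.one_le_pow _ _ (by omega)
    have hcases : x ^ (d ^ m0 - 1) = 1 ∨ x ^ (d ^ m0 + 1) = 1 := by
      rcases fiber_eq (pow_ne_zero _ hx0) hx0 hiterΩ with h | h
      · left
        have h2 : x ^ (d ^ m0 - 1) * x = 1 * x := by
          rw [one_mul, ← pow_succ]
          have h3 : d ^ m0 - 1 + 1 = d ^ m0 := by omega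
          rw [h3, ← h]
        exact mul_right_cancel₀ hx0 h2
      · right
        rw [pow_succ]
        have h6 : x ^ d ^ m0 * x = x ^ d ^ m0 * (x ^ d ^ m0)⁻¹ := by rw [← h]
        rw [h6]
        exact mul_inv_cancel₀ (pow_ne_zero _ hx0)
    have hpd : p ∣ d ^ m0 := by
      rw [hd, ← pow_mul]
      exact dvd_pow_self p (by positivity)
    have hxS : x ∈ S := by
      rcases hdich with hq' | hq'
      · -- x ^ q = x, so x ^ (q - 1) = 1
        have hxq1 : x ^ (q - 1) = 1 := by
          have h2 : x ^ (q - 1) * x = 1 * x := by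
            rw [one_mul, ← pow_succ]
            have h3 : q - 1 + 1 = q := by omega
            rw [h3, hq']
          exact mul_right_cancel₀ hx0 h2
        have hstep : ∀ N : ℕ, ¬ p ∣ N → x ^ N = 1 → x ∈ S := by
          intro N hpN hxN
          left
          have hxt : x ^ Nat.gcd N (q - 1) = 1 := pow_gcd_eq_one.mpr ⟨hxN, hxq1⟩
          have hpt : ¬ p ∣ Nat.gcd N (q - 1) := fun h =>
            hpN (h.trans (Nat.gcd_dvd_left _ _))
          have hcop : (Nat.gcd N (q - 1)).Coprime (p ^ m) :=
            (Nat.coprime_comm.mp ((hp.coprime_iff_not_dvd).mpr hpt)).pow_right m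
          have hta : Nat.gcd N (q - 1) ∣ a := by
            apply hcop.dvd_of_dvd_mul_left
            rw [← hqa]
            exact Nat.gcd_dvd_right _ _
          obtain ⟨u, hu⟩ := hta
          show x ^ a = 1
          rw [hu, pow_mul, hxt, one_pow]
        rcases hcases with hN | hN
        · refine hstep (d ^ m0 - 1) ?_ hN
          intro hdvdN
          have h4 := Nat.dvd_sub hpd hdvdN
          have h5 : d ^ m0 - (d ^ m0 - 1) = 1 := by omega
          rw [h5] at h4
          exact hp.one_lt.ne' (Nat.dvd_one.mp h4)
        · refine hstep (d ^ m0 + 1) ?_ hN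
          intro hdvdN
          have h4 := Nat.dvd_sub hdvdN hpd
          have h5 : d ^ m0 + 1 - d ^ m0 = 1 := by omega
          rw [h5] at h4
          exact hp.one_lt.ne' (Nat.dvd_one.mp h4)
      · -- x ^ q = x⁻¹, so x ^ (q + 1) = 1
        right
        show x ^ (q + 1) = 1
        rw [pow_succ, hq']
        exact inv_mul_cancel₀ hx0
    exact ⟨x, hxS, hβx.symm⟩
  have himgfin : ((fun x : Ω => x + x⁻¹) '' S).Finite := hSfin.image _
  have h1 : (ι '' P).ncard ≤ ((fun x : Ω => x + x⁻¹) '' S).ncard :=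
    Set.ncard_le_ncard hmain himgfin
  have h2 : 2 * ((fun x : Ω => x + x⁻¹) '' S).ncard ≤ S.ncard + 4 :=
    two_mul_image_ncard_le hSfin hS0 hSinv
  have h3 : S.ncard ≤ a + (q + 1) := by
    calc S.ncard ≤ ({x : Ω | x ^ a = 1} : Set Ω).ncard
          + ({x : Ω | x ^ (q + 1) = 1} : Set Ω).ncard := Set.ncard_union_le _ _
      _ ≤ a + (q + 1) :=
          add_le_add (ncard_pow_eq_one_le a (by omega)) (ncard_pow_eq_one_le _ (by omega))
  have hPimg : (ι '' P).ncard = P.ncard := Set.ncard_image_of_injective _ hinj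
  omega


section NumberFieldGlue

variable (K : Type*) [Field K] [NumberField K]

lemma norm_span_natCast (ℓ : ℕ) :
    Ideal.absNorm (Ideal.span {(ℓ : 𝓞 K)}) = ℓ ^ Module.finrank ℤ (𝓞 K) := by
  rw [Ideal.absNorm_span_singleton]
  have h1 : ((ℓ : ℕ) : 𝓞 K) = algebraMap ℤ (𝓞 K) (ℓ : ℤ) := by simp
  rw [h1, Algebra.norm_algebraMap_of_basis (Module.Free.chooseBasis ℤ (𝓞 K)),
    ← Module.finrank_eq_card_chooseBasisIndex, Int.natAbs_pow, Int.natAbs_natCast]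

lemma finrank_int_pos : 0 < Module.finrank ℤ (𝓞 K) := by
  rw [NumberField.RingOfIntegers.rank]
  exact Module.finrank_pos

lemma exists_prime_ideal_nat (ℓ : ℕ) (hℓ : ℓ.Prime) :
    ∃ 𝔭 : Ideal (𝓞 K), 𝔭.IsPrime ∧ 𝔭 ≠ ⊥ ∧ (ℓ : 𝓞 K) ∈ 𝔭 := by
  have hne : (ℓ : 𝓞 K) ≠ 0 := Nat.cast_ne_zero.mpr hℓ.pos.ne'
  have hunit : ¬ IsUnit (ℓ : 𝓞 K) := by
    intro h
    have h1 : Ideal.span {(ℓ : 𝓞 K)} = ⊤ := Ideal.span_singleton_eq_top.mpr h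
    have h2 := norm_span_natCast K ℓ
    rw [h1, Ideal.absNorm_top] at h2
    have h3 := finrank_int_pos K
    have h4 : 2 ≤ ℓ := hℓ.two_le
    have h5 : 1 < ℓ ^ Module.finrank ℤ (𝓞 K) := Nat.one_lt_pow h3.ne' (by omega)
    omega
  obtain ⟨M, hM, hle⟩ := Ideal.exists_le_maximal _ (Ideal.span_singleton_ne_top hunit)
  refine ⟨M, hM.isPrime, ?_, hle (Ideal.mem_span_singleton_self _)⟩
  intro hbot
  have h6 := hle (Ideal.mem_span_singleton_self (ℓ : 𝓞 K))
  rw [hbot] at h6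
  exact hne (Ideal.mem_bot.mp h6)

variable {K}

attribute [local instance] Ideal.Quotient.field

set_option maxHeartbeats 1000000
set_option synthInstance.maxHeartbeats 400000

lemma residue_finite (𝔭 : Ideal (𝓞 K)) (hbot : 𝔭 ≠ ⊥) : Finite (𝓞 K ⧸ 𝔭) := by
  rw [← Ideal.absNorm_ne_zero_iff]
  exact Ideal.absNorm_ne_zero_iff_mem_nonZeroDivisors.mpr (mem_nonZeroDivisors_of_ne_zero hbot)


lemma residue_two_le (𝔭 : Ideal (𝓞 K)) (hprime : 𝔭.IsPrime) (hbot : 𝔭 ≠ ⊥) :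
    2 ≤ Ideal.absNorm 𝔭 := by
  haveI hmax : 𝔭.IsMaximal := Ideal.IsPrime.isMaximal hprime hbot
  haveI : Finite (𝓞 K ⧸ 𝔭) := residue_finite 𝔭 hbot
  haveI : Fintype (𝓞 K ⧸ 𝔭) := Fintype.ofFinite _
  have hq : Fintype.card (𝓞 K ⧸ 𝔭) = Ideal.absNorm 𝔭 := by
    rw [Ideal.absNorm_apply, Submodule.cardQuot_apply, Nat.card_eq_fintype_card]
  rw [← hq]
  exact Fintype.one_lt_card

lemma residue_count_le (g : (𝓞 K)[X]) (𝔭 : Ideal (𝓞 K)) (hbot : 𝔭 ≠ ⊥) :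
    perCount (g.map (Ideal.Quotient.mk 𝔭)) ≤ Ideal.absNorm 𝔭 := by
  haveI : Finite (𝓞 K ⧸ 𝔭) := residue_finite 𝔭 hbot
  rw [perCount, Nat.card_coe_set_eq, Ideal.absNorm_apply, Submodule.cardQuot_apply,
    ← Set.ncard_univ]
  exact Set.ncard_le_ncard (Set.subset_univ _) Set.finite_univ

lemma residue_low (p k d : ℕ) (hp : p.Prime) (hpodd : Odd p) (hk : 1 ≤ k) (hd : d = p ^ k)
    (𝔭 : Ideal (𝓞 K)) (hprime : 𝔭.IsPrime) (hbot : 𝔭 ≠ ⊥) :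
    Ideal.absNorm 𝔭 - 1
      ≤ 2 * perCount ((dickson 1 1 d : (𝓞 K)[X]).map (Ideal.Quotient.mk 𝔭)) := by
  haveI hmax : 𝔭.IsMaximal := Ideal.IsPrime.isMaximal hprime hbot
  haveI : Finite (𝓞 K ⧸ 𝔭) := residue_finite 𝔭 hbot
  haveI : Fintype (𝓞 K ⧸ 𝔭) := Fintype.ofFinite _
  have hq : Fintype.card (𝓞 K ⧸ 𝔭) = Ideal.absNorm 𝔭 := by
    rw [Ideal.absNorm_apply, Submodule.cardQuot_apply, Nat.card_eq_fintype_card]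
  have hmap : (dickson 1 1 d : (𝓞 K)[X]).map (Ideal.Quotient.mk 𝔭)
      = dickson 1 (1 : 𝓞 K ⧸ 𝔭) d := by rw [map_dickson, map_one]
  have hper : perCount ((dickson 1 1 d : (𝓞 K)[X]).map (Ideal.Quotient.mk 𝔭))
      = ({α : 𝓞 K ⧸ 𝔭 | ∃ m, 1 ≤ m ∧
          (fun x => (dickson 1 (1 : 𝓞 K ⧸ 𝔭) d).eval x)^[m] α = α}).ncard := by
    rw [perCount, hmap, Nat.card_coe_set_eq]
  have h := low_bound (F := 𝓞 K ⧸ 𝔭) p k d hp hpodd hk hd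
  rw [hq] at h
  rw [hper]
  exact h

lemma residue_up (p k d m : ℕ) (hp : p.Prime) (hk : 1 ≤ k) (hd : d = p ^ k) (hm : 1 ≤ m)
    (𝔭 : Ideal (𝓞 K)) (hprime : 𝔭.IsPrime) (hbot : 𝔭 ≠ ⊥)
    (hmod : Ideal.absNorm 𝔭 ≡ 1 [MOD p ^ m]) :
    2 * perCount ((dickson 1 1 d : (𝓞 K)[X]).map (Ideal.Quotient.mk 𝔭))
      ≤ (Ideal.absNorm 𝔭 - 1) / p ^ m + Ideal.absNorm 𝔭 + 5 := by
  haveI hmax : 𝔭.IsMaximal := Ideal.IsPrime.isMaximal hprime hbot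
  haveI : Finite (𝓞 K ⧸ 𝔭) := residue_finite 𝔭 hbot
  haveI : Fintype (𝓞 K ⧸ 𝔭) := Fintype.ofFinite _
  have hq : Fintype.card (𝓞 K ⧸ 𝔭) = Ideal.absNorm 𝔭 := by
    rw [Ideal.absNorm_apply, Submodule.cardQuot_apply, Nat.card_eq_fintype_card]
  have hmap : (dickson 1 1 d : (𝓞 K)[X]).map (Ideal.Quotient.mk 𝔭)
      = dickson 1 (1 : 𝓞 K ⧸ 𝔭) d := by rw [map_dickson, map_one]
  have hper : perCount ((dickson 1 1 d : (𝓞 K)[X]).map (Ideal.Quotient.mk 𝔭))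
      = ({α : 𝓞 K ⧸ 𝔭 | ∃ m', 1 ≤ m' ∧
          (fun x => (dickson 1 (1 : 𝓞 K ⧸ 𝔭) d).eval x)^[m'] α = α}).ncard := by
    rw [perCount, hmap, Nat.card_coe_set_eq]
  have h := up_bound (F := 𝓞 K ⧸ 𝔭) p k d m hp hk hd hm (by rw [hq]; exact hmod)
  rw [hq] at h
  rw [hper]
  exact h

lemma exists_big_prime (M N : ℕ) (hM : M ≠ 0) :
    ∃ 𝔭 : Ideal (𝓞 K), 𝔭.IsPrime ∧ 𝔭 ≠ ⊥ ∧ N ≤ Ideal.absNorm 𝔭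
      ∧ Ideal.absNorm 𝔭 ≡ 1 [MOD M] := by
  obtain ⟨ℓ, hℓp, hℓgt, hℓmod⟩ := Nat.exists_prime_gt_modEq_one N hM
  obtain ⟨𝔭, hprime, hbot, hmem⟩ := exists_prime_ideal_nat K ℓ hℓp
  haveI hmax : 𝔭.IsMaximal := Ideal.IsPrime.isMaximal hprime hbot
  haveI : Finite (𝓞 K ⧸ 𝔭) := residue_finite 𝔭 hbot
  haveI : Fintype (𝓞 K ⧸ 𝔭) := Fintype.ofFinite _
  have hq : Fintype.card (𝓞 K ⧸ 𝔭) = Ideal.absNorm 𝔭 := by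
    rw [Ideal.absNorm_apply, Submodule.cardQuot_apply, Nat.card_eq_fintype_card]
  have hℓ0 : ((ℓ : ℕ) : 𝓞 K ⧸ 𝔭) = 0 := by
    rw [← map_natCast (Ideal.Quotient.mk 𝔭)]
    exact Ideal.Quotient.eq_zero_iff_mem.mpr hmem
  haveI : CharP (𝓞 K ⧸ 𝔭) (ringChar (𝓞 K ⧸ 𝔭)) := ringChar.charP _
  have hdvd : ringChar (𝓞 K ⧸ 𝔭) ∣ ℓ :=
    (CharP.cast_eq_zero_iff (𝓞 K ⧸ 𝔭) (ringChar (𝓞 K ⧸ 𝔭)) ℓ).mp hℓ0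
  have hcharℓ : ringChar (𝓞 K ⧸ 𝔭) = ℓ := by
    rcases (Nat.dvd_prime hℓp).mp hdvd with h1 | h1
    · exact absurd h1 CharP.ringChar_ne_one
    · exact h1
  haveI : CharP (𝓞 K ⧸ 𝔭) ℓ := hcharℓ ▸ ringChar.charP (𝓞 K ⧸ 𝔭)
  haveI : Fact ℓ.Prime := ⟨hℓp⟩
  obtain ⟨f, _, hcard⟩ := FiniteField.card (𝓞 K ⧸ 𝔭) ℓ
  have hqf : Ideal.absNorm 𝔭 = ℓ ^ (f : ℕ) := by rw [← hq, hcard]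
  refine ⟨𝔭, hprime, hbot, ?_, ?_⟩
  · have h1 : ℓ ≤ ℓ ^ (f : ℕ) := Nat.le_self_pow (by exact_mod_cast f.ne_zero) ℓ
    omega
  · rw [hqf]
    have h2 := hℓmod.pow (f : ℕ)
    rwa [one_pow] at h2

end NumberFieldGlue

end PerInfAux

set_option maxHeartbeats 1000000 in
theorem perInf_chebyshev_odd_prime_power (K : Type*) [Field K] [NumberField K]
    (p k d : ℕ) (hp : p.Prime) (hpodd : Odd p) (hk : 1 ≤ k) (hd : d = p ^ k) :
    perInf K (Polynomial.dickson 1 1 d : (𝓞 K)[X]) = 1 / 2 := by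
  classical
  let ν : {I : Ideal (𝓞 K) // I.IsPrime ∧ I ≠ ⊥} → ℕ := fun 𝔭 => Ideal.absNorm 𝔭.1
  let c : {I : Ideal (𝓞 K) // I.IsPrime ∧ I ≠ ⊥} → ℕ := fun 𝔭 =>
    perCount ((dickson 1 1 d : (𝓞 K)[X]).map (Ideal.Quotient.mk 𝔭.1))
  let u : {I : Ideal (𝓞 K) // I.IsPrime ∧ I ≠ ⊥} → ℝ := fun 𝔭 => (c 𝔭 : ℝ) / (ν 𝔭 : ℝ)
  let Φ : Filter {I : Ideal (𝓞 K) // I.IsPrime ∧ I ≠ ⊥} := comap ν atTop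
  have hgoal : perInf K (dickson 1 1 d : (𝓞 K)[X]) = liminf u Φ := rfl
  rw [hgoal]
  have hq2 : ∀ 𝔭, 2 ≤ ν 𝔭 := fun 𝔭 => PerInfAux.residue_two_le 𝔭.1 𝔭.2.1 𝔭.2.2
  have hcle : ∀ 𝔭, c 𝔭 ≤ ν 𝔭 := fun 𝔭 => PerInfAux.residue_count_le _ 𝔭.1 𝔭.2.2
  have hu0 : ∀ 𝔭, 0 ≤ u 𝔭 := fun 𝔭 => by positivity
  have hu1 : ∀ 𝔭, u 𝔭 ≤ 1 := fun 𝔭 => by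
    have h2 := hq2 𝔭
    have h1 : (0 : ℝ) < (ν 𝔭 : ℝ) := by exact_mod_cast Nat.lt_of_lt_of_le (by norm_num) h2
    rw [div_le_one h1]
    exact_mod_cast hcle 𝔭
  haveI hNB : Φ.NeBot := by
    apply comap_neBot
    intro t ht
    rcases mem_atTop_sets.mp ht with ⟨N, hN⟩
    obtain ⟨𝔭, h1, h2, h3, _⟩ := PerInfAux.exists_big_prime (K := K) 1 N one_ne_zero
    exact ⟨⟨𝔭, h1, h2⟩, hN _ h3⟩
  have hbdd_le : Filter.IsBoundedUnder (· ≤ ·) Φ u := ⟨1, Filter.eventually_map.mpr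
    (Filter.Eventually.of_forall hu1)⟩
  have hbdd_ge : Filter.IsBoundedUnder (· ≥ ·) Φ u := ⟨0, Filter.eventually_map.mpr
    (Filter.Eventually.of_forall hu0)⟩
  have hcob : Filter.IsCoboundedUnder (· ≥ ·) Φ u := hbdd_le.isCoboundedUnder_ge
  have hge : ∀ ε : ℝ, 0 < ε → 1 / 2 - ε ≤ liminf u Φ := by
    intro ε hε
    apply le_liminf_of_le hcob
    have hev : ∀ᶠ 𝔭 in Φ, max 2 ⌈1/ε⌉₊ ≤ ν 𝔭 :=
      tendsto_comap.eventually (eventually_ge_atTop _)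
    filter_upwards [hev] with 𝔭 hN
    have h2q : 2 ≤ ν 𝔭 := le_trans (le_max_left _ _) hN
    have hlow := PerInfAux.residue_low p k d hp hpodd hk hd 𝔭.1 𝔭.2.1 𝔭.2.2
    have hq0 : (0 : ℝ) < (ν 𝔭 : ℝ) := by exact_mod_cast Nat.lt_of_lt_of_le (by norm_num) h2q
    have hcast : (ν 𝔭 : ℝ) - 1 ≤ 2 * (c 𝔭 : ℝ) := by
      have h' : ((ν 𝔭 - 1 : ℕ) : ℝ) ≤ ((2 * c 𝔭 : ℕ) : ℝ) := Nat.cast_le.mpr hlow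
      rw [Nat.cast_sub (by omega), Nat.cast_mul] at h'
      simpa using h'
    have hεq : 1 ≤ ε * (ν 𝔭 : ℝ) := by
      have h1 : (1 : ℝ)/ε ≤ (⌈1/ε⌉₊ : ℝ) := Nat.le_ceil _
      have h2 : ((⌈1/ε⌉₊ : ℕ) : ℝ) ≤ (ν 𝔭 : ℝ) := by
        exact_mod_cast le_trans (le_max_right 2 _) hN
      have h3 : (1 : ℝ)/ε ≤ (ν 𝔭 : ℝ) := le_trans h1 h2
      rw [div_le_iff₀ hε] at h3
      nlinarith [h3]
    show 1/2 - ε ≤ (c 𝔭 : ℝ) / (ν 𝔭 : ℝ)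
    rw [le_div_iff₀ hq0]
    nlinarith [hcast, hεq]
  have hle : ∀ ε : ℝ, 0 < ε → liminf u Φ ≤ 1 / 2 + ε := by
    intro ε hε
    apply liminf_le_of_frequently_le _ hbdd_ge
    set m : ℕ := max 1 ⌈1/ε⌉₊ with hmdef
    have hm1 : 1 ≤ m := le_max_left _ _
    have hpm0 : (0 : ℝ) < ((p ^ m : ℕ) : ℝ) := by
      exact_mod_cast pow_pos hp.pos m
    have hpmε : 1 ≤ ε * ((p ^ m : ℕ) : ℝ) := by
      have h1 : (⌈1/ε⌉₊ : ℕ) < 2 ^ m := lt_of_le_of_lt (le_max_right 1 _) Nat.lt_two_pow_self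
      have h2 : (2 : ℕ) ^ m ≤ p ^ m := Nat.pow_le_pow_left hp.two_le m
      have h3 : (1 : ℝ)/ε ≤ ((p ^ m : ℕ) : ℝ) := by
        calc (1 : ℝ)/ε ≤ (⌈1/ε⌉₊ : ℝ) := Nat.le_ceil _
          _ ≤ ((p ^ m : ℕ) : ℝ) := by exact_mod_cast (by omega : (⌈1/ε⌉₊ : ℕ) ≤ p ^ m)
      rw [div_le_iff₀ hε] at h3
      nlinarith [h3]
    rw [frequently_iff]
    intro U hU
    rcases Filter.mem_comap.mp hU with ⟨t, ht, hsub⟩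
    rcases mem_atTop_sets.mp ht with ⟨N, hN⟩
    obtain ⟨𝔭, h1, h2, h3, hmod⟩ := PerInfAux.exists_big_prime (K := K)
      (p ^ m) (max N ⌈5/ε⌉₊) (pow_pos hp.pos m).ne'
    refine ⟨⟨𝔭, h1, h2⟩, hsub ?_, ?_⟩
    · exact hN _ (le_trans (le_max_left _ _) h3)
    · set 𝔮 : {I : Ideal (𝓞 K) // I.IsPrime ∧ I ≠ ⊥} := ⟨𝔭, h1, h2⟩ with h𝔮
      have h2q : 2 ≤ ν 𝔮 := hq2 𝔮
      have hup := PerInfAux.residue_up p k d m hp hk hd hm1 𝔭 h1 h2 hmod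
      have hq0 : (0 : ℝ) < (ν 𝔮 : ℝ) := by exact_mod_cast Nat.lt_of_lt_of_le (by norm_num) h2q
      have hupR : 2 * (c 𝔮 : ℝ)
          ≤ (((ν 𝔮 - 1) / p ^ m : ℕ) : ℝ) + (ν 𝔮 : ℝ) + 5 := by
        have h' : ((2 * c 𝔮 : ℕ) : ℝ)
            ≤ (((ν 𝔮 - 1) / p ^ m + ν 𝔮 + 5 : ℕ) : ℝ) := Nat.cast_le.mpr hup
        push_cast at h'
        convert h' using 2 <;> norm_num
      have hdivle : (((ν 𝔮 - 1) / p ^ m : ℕ) : ℝ) ≤ (ν 𝔮 : ℝ) / ((p ^ m : ℕ) : ℝ) := by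
        calc (((ν 𝔮 - 1) / p ^ m : ℕ) : ℝ)
            ≤ ((ν 𝔮 - 1 : ℕ) : ℝ) / ((p ^ m : ℕ) : ℝ) := Nat.cast_div_le
          _ ≤ (ν 𝔮 : ℝ) / ((p ^ m : ℕ) : ℝ) := by
              gcongr
              exact_mod_cast Nat.sub_le _ _
      have hdiv : (ν 𝔮 : ℝ) / ((p ^ m : ℕ) : ℝ) ≤ ε * (ν 𝔮 : ℝ) := by
        rw [div_le_iff₀ hpm0]
        nlinarith [hpmε, hq0.le]
      have h5ε : 5 ≤ ε * (ν 𝔮 : ℝ) := by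
        have h1' : (5 : ℝ)/ε ≤ (⌈5/ε⌉₊ : ℝ) := Nat.le_ceil _
        have h2' : ((⌈5/ε⌉₊ : ℕ) : ℝ) ≤ (ν 𝔮 : ℝ) := by
          exact_mod_cast le_trans (le_max_right N _) h3
        have h3' := le_trans h1' h2'
        rw [div_le_iff₀ hε] at h3'
        nlinarith [h3']
      show (c 𝔮 : ℝ) / (ν 𝔮 : ℝ) ≤ 1/2 + ε
      rw [div_le_iff₀ hq0]
      nlinarith [hupR, hdivle, hdiv, h5ε]
  have hL1 : liminf u Φ ≤ 1/2 := le_of_forall_pos_le_add (fun ε hε => hle ε hε)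
  have hL2 : 1/2 ≤ liminf u Φ := by
    by_contra hcon
    push_neg at hcon
    have hεpos : 0 < (1/2 - liminf u Φ) / 2 := by linarith
    have := hge _ hεpos
    linarith
  linarith
end

section
/- Let d ≥ 0 and let T_d = dickson 1 1 d ∈ ℤ[X] be the degree-d Chebyshev polynomial. Then for every natural number i with i ≤ d, the coefficient of X^i in T_d is nonzero if and only if i ≡ d (mod 2). -/
/-!
The recurrence `T_{n+2} = X T_{n+1} - T_n` gives
`coeff (j+1) T_{n+2} = coeff j T_{n+1} - coeff (j+1) T_n`.
By two-step induction this shows that `T_n` has no coefficients of the wrong parity, and that the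
coefficient of `X^(n-2m)` has sign exactly `(-1)^m`: the two terms on the right have the same
sign, so no cancellation ever occurs.
-/

open Polynomial

namespace Polynomial

variable {R : Type*} [CommRing R] {k : ℕ} {a : R}

theorem coeff_dickson_add_two_zero (n : ℕ) :
    (dickson k a (n + 2)).coeff 0 = -(a * (dickson k a n).coeff 0) := by
  simp

theorem coeff_dickson_add_two_succ (n j : ℕ) :
    (dickson k a (n + 2)).coeff (j + 1) =
      (dickson k a (n + 1)).coeff j - a * (dickson k a n).coeff (j + 1) := by
  simp [coeff_X_mul]

theorem coeff_dickson_eq_zero_of_lt {n i : ℕ} (h : n < i) : (dickson k a n).coeff i = 0 := by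
  induction n using Nat.twoStepInduction generalizing i with
  | zero =>
    obtain ⟨j, rfl⟩ := Nat.exists_eq_add_of_lt h
    simp [coeff_ofNat_succ]
  | one => simp [coeff_X, h.ne]
  | more n ih₀ ih₁ =>
    obtain ⟨j, rfl⟩ := Nat.exists_eq_add_of_lt (Nat.zero_lt_of_lt h)
    rw [coeff_dickson_add_two_succ, ih₁ (by omega), ih₀ (by omega), mul_zero, sub_zero]

theorem coeff_dickson_eq_zero_of_not_modEq {n i : ℕ} (h : ¬i ≡ n [MOD 2]) :
    (dickson k a n).coeff i = 0 := by
  unfold Nat.ModEq at h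
  induction n using Nat.twoStepInduction generalizing i with
  | zero => exact coeff_dickson_eq_zero_of_lt (by omega)
  | one => rw [dickson_one, coeff_X, if_neg (by omega)]
  | more n ih₀ ih₁ =>
    cases i with
    | zero => rw [coeff_dickson_add_two_zero, ih₀ (by omega), mul_zero, neg_zero]
    | succ j => rw [coeff_dickson_add_two_succ, ih₁ (by omega), ih₀ (by omega), mul_zero, sub_zero]

theorem neg_one_pow_mul_coeff_dickson_pos [LinearOrder R] [IsStrictOrderedRing R]
    (hk : k ≤ 2) (ha : 0 < a) {n i m : ℕ} (h : i + 2 * m = n) :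
    0 < (-1) ^ m * (dickson k a n).coeff i := by
  induction n using Nat.twoStepInduction generalizing i m with
  | zero =>
    obtain ⟨rfl, rfl⟩ : i = 0 ∧ m = 0 := by omega
    have hk' : (k : R) < 3 := by exact_mod_cast Nat.lt_succ_of_le hk
    simpa [coeff_ofNat_zero] using hk'
  | one =>
    obtain ⟨rfl, rfl⟩ : i = 1 ∧ m = 0 := by omega
    simp
  | more n ih₀ ih₁ =>
    cases i with
    | zero =>
      obtain ⟨m, rfl⟩ : ∃ m', m = m' + 1 := ⟨m - 1, by omega⟩
      have h₀ := ih₀ (i := 0) (m := m) (by omega)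
      rw [coeff_dickson_add_two_zero,
        show ∀ c : R, (-1) ^ (m + 1) * -(a * c) = a * ((-1) ^ m * c) by intro c; ring]
      exact mul_pos ha h₀
    | succ j =>
      rw [coeff_dickson_add_two_succ]
      cases m with
      | zero =>
        rw [coeff_dickson_eq_zero_of_lt (n := n) (i := j + 1) (by omega), mul_zero, sub_zero]
        exact ih₁ (by omega)
      | succ m =>
        have h₁ := ih₁ (i := j) (m := m + 1) (by omega)
        have h₀ := ih₀ (i := j + 1) (m := m) (by omega)
        rw [show ∀ c₁ c₀ : R, (-1) ^ (m + 1) * (c₁ - a * c₀) =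
            (-1) ^ (m + 1) * c₁ + a * ((-1) ^ m * c₀) by intro c₁ c₀; ring]
        exact add_pos h₁ (mul_pos ha h₀)

end Polynomial

theorem chebyshev_coeff_ne_zero_iff (d : ℕ) :
    ∀ i ≤ d, ((Polynomial.dickson 1 1 d : ℤ[X]).coeff i ≠ 0 ↔ i ≡ d [MOD 2]) := by
  intro i hi
  refine ⟨not_imp_comm.mp coeff_dickson_eq_zero_of_not_modEq, fun hmod => ?_⟩
  obtain ⟨m, hm⟩ : ∃ m, i + 2 * m = d :=
    ⟨(d - i) / 2, by have := Nat.ModEq.dvd hmod; omega⟩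
  exact right_ne_zero_of_mul (neg_one_pow_mul_coeff_dickson_pos one_le_two one_pos hm).ne'
end

section
/- Let F be a field, d ≥ 1, and β ∈ F with β ≠ 0. Then β + β⁻¹ is a periodic point of the evaluation map of T_d = dickson 1 1 d over F if and only if β is a periodic point of the power map x ↦ x^d on F. -/
/-! Under `x ↦ x + x⁻¹` the map `T_d` corresponds to `x ↦ x ^ d`, so the `m`-th iterate of
`T_d` sends `β + β⁻¹` to `γ + γ⁻¹` with `γ = β ^ d ^ m`. Since `γ + γ⁻¹ = β + β⁻¹` forces
`γ = β` or `γ = β⁻¹`, a period `m` of `β + β⁻¹` gives the period `m` or `2 * m` of `β`. -/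

open Polynomial

theorem Polynomial.iterate_dickson_one_one_eval_add_inv {R : Type*} [CommRing R] {x y : R}
    (h : x * y = 1) (d m : ℕ) :
    (fun z => (dickson 1 1 d : R[X]).eval z)^[m] (x + y) = x ^ d ^ m + y ^ d ^ m := by
  induction m with
  | zero => simp
  | succ m ih =>
    have hm : x ^ d ^ m * y ^ d ^ m = 1 := by rw [← mul_pow, h, one_pow]
    rw [Function.iterate_succ_apply', ih, dickson_one_one_eval_add_inv _ _ hm,
      ← pow_mul, ← pow_mul, ← pow_succ]

theorem add_inv_eq_add_inv_iff {K : Type*} [Field K] {a b : K} (ha : a ≠ 0) (hb : b ≠ 0) :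
    a + a⁻¹ = b + b⁻¹ ↔ a = b ∨ a = b⁻¹ := by
  have hfactor : a + a⁻¹ - (b + b⁻¹) = (a - b) * (a * b - 1) / (a * b) := by
    field_simp
    ring
  rw [← sub_eq_zero, hfactor, div_eq_zero_iff, mul_eq_zero, sub_eq_zero, sub_eq_zero,
    ← mul_eq_one_iff_eq_inv₀ hb]
  simp [ha, hb]

theorem chebyshev_periodic_iff_power_periodic_general (F : Type*) [Field F] (d : ℕ)
    (β : F) (hβ : β ≠ 0) :
    (∃ m, 1 ≤ m ∧
        (fun x => (Polynomial.dickson 1 1 d : F[X]).eval x)^[m] (β + β⁻¹) = β + β⁻¹) ↔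
      (∃ m, 1 ≤ m ∧ (fun x : F => x ^ d)^[m] β = β) := by
  simp only [iterate_dickson_one_one_eval_add_inv (mul_inv_cancel₀ hβ), pow_iterate, inv_pow]
  constructor
  · rintro ⟨m, hm, hperiod⟩
    rcases (add_inv_eq_add_inv_iff (pow_ne_zero _ hβ) hβ).mp hperiod with hfix | hinv
    · exact ⟨m, hm, hfix⟩
    · refine ⟨2 * m, by omega, ?_⟩
      calc β ^ d ^ (2 * m) = (β ^ d ^ m) ^ d ^ m := by rw [two_mul, pow_add, pow_mul]
        _ = β := by rw [hinv, inv_pow, hinv, inv_inv]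
  · rintro ⟨m, hm, hperiod⟩
    exact ⟨m, hm, by rw [hperiod]⟩

theorem chebyshev_periodic_iff_power_periodic (F : Type*) [Field F] (d : ℕ) (hd : 1 ≤ d)
    (β : F) (hβ : β ≠ 0) :
    (∃ m, 1 ≤ m ∧
        (fun x => (Polynomial.dickson 1 1 d : F[X]).eval x)^[m] (β + β⁻¹) = β + β⁻¹) ↔
      (∃ m, 1 ≤ m ∧ (fun x : F => x ^ d)^[m] β = β) :=
  chebyshev_periodic_iff_power_periodic_general F d β hβ
end
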